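/- arXiv:0910.3898 — 3 statements merged into one kernel-verified Lean document; each statement's English description precedes it below -/
import Mathlib

section
/- Let K be a number field and let D be a divisor on K. Then the set H⁰(D) is finite. -/
/-!
Clear denominators with one integer: `M = N(∏_{a_P > 0} P ^ a_P)` lies in that ideal, so for every
`α ∈ H⁰(D)` all `P`-adic valuations of `M α` are nonnegative and `M α` is an algebraic integer.
The archimedean conditions bound every conjugate of `M α` by `M · ∑_w e^{r_w}`, and a number field
contains only finitely many algebraic integers with bounded conjugates.
-/

open NumberField IsDedekindDomain Ideal

variable (K : Type*) [Field K] [NumberField K]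

/-- A divisor on a number field: a finitely supported integer coefficient at each
nonzero prime ideal of the ring of integers, and a real coefficient at each infinite place. -/
structure Divisor where
  a : HeightOneSpectrum (𝓞 K) → ℤ
  r : InfinitePlace K → ℝ
  fin : (Function.support a).Finite

variable {K}

/-- The (multiplicative) degree of a divisor:
`deg D = ∏_P N(P)^(a_P) * ∏_w exp (m_w * r_w)`. -/
noncomputable def Divisor.deg (D : Divisor K) : ℝ :=
  (∏ᶠ P : HeightOneSpectrum (𝓞 K), (absNorm P.asIdeal : ℝ) ^ (D.a P)) *
    ∏ w : InfinitePlace K, Real.exp (w.mult * D.r w)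

open scoped Classical in
/-- The normalized P-adic absolute value `|α|_P = N(P)^(-v_P α)`. -/
noncomputable def padicAbs (P : HeightOneSpectrum (𝓞 K)) (α : K) : ℝ :=
  if hα : α = 0 then 0
  else (absNorm P.asIdeal : ℝ) ^
    (Multiplicative.toAdd (WithZero.unzero ((P.valuation K).ne_zero_iff.mpr hα)))

/-- The set of multiples of a divisor:
`H⁰(D) = {α : |α|_P ≤ N(P)^(a_P) for all P, and w(α)^(m_w) ≤ exp (m_w * r_w) for all w}`. -/
def H0 (D : Divisor K) : Set K :=
  {α | (∀ P : HeightOneSpectrum (𝓞 K), padicAbs P α ≤ (absNorm P.asIdeal : ℝ) ^ (D.a P)) ∧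
    ∀ w : InfinitePlace K, (w α) ^ w.mult ≤ Real.exp (w.mult * D.r w)}

/-- `h⁰(D)` is the cardinality of `H⁰(D)`. -/
noncomputable def h0 (D : Divisor K) : ℕ := Nat.card (H0 D)

/-- Coefficientwise difference of divisors. -/
noncomputable def Divisor.sub (D E : Divisor K) : Divisor K :=
  ⟨D.a - E.a, D.r - E.r, ((D.fin.union E.fin).subset (Function.support_sub D.a E.a))⟩

variable (K)

/-- `S₁(K)` is the number of real places of `K`. -/
noncomputable def S1 : ℕ := InfinitePlace.nrRealPlaces K

/-- `S₂(K)` is twice the number of complex places of `K`. -/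
noncomputable def S2 : ℕ := 2 * InfinitePlace.nrComplexPlaces K

namespace IsDedekindDomain.HeightOneSpectrum

variable {S : Type*} [CommRing S] [IsDedekindDomain S] [Module.Free ℤ S] [Module.Finite ℤ S]

theorem exists_natCast_mem_pow (s : Finset (HeightOneSpectrum S))
    (n : HeightOneSpectrum S → ℕ) :
    ∃ M : ℕ, M ≠ 0 ∧ ∀ v ∈ s, (M : S) ∈ v.asIdeal ^ n v := by
  have hI : ∏ v ∈ s, v.asIdeal ^ n v ≠ ⊥ :=
    Finset.prod_ne_zero_iff.mpr fun v _ => pow_ne_zero _ v.ne_bot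
  refine ⟨absNorm (∏ v ∈ s, v.asIdeal ^ n v), absNorm_eq_zero_iff.not.mpr hI, fun v hv => ?_⟩
  exact Ideal.le_of_dvd (Finset.dvd_prod_of_mem (fun v => v.asIdeal ^ n v) hv) (absNorm_mem _)

end IsDedekindDomain.HeightOneSpectrum

open IsDedekindDomain.HeightOneSpectrum WithZero

section

variable {K}

theorem valuation_le_exp_of_padicAbs_le {P : HeightOneSpectrum (𝓞 K)} {α : K} {n : ℤ}
    (h : padicAbs P α ≤ (absNorm P.asIdeal : ℝ) ^ n) : P.valuation K α ≤ exp n := by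
  rcases eq_or_ne α 0 with rfl | hα
  · simp
  rw [padicAbs, dif_neg hα,
    zpow_le_zpow_iff_right₀ (by exact_mod_cast NumberField.HeightOneSpectrum.one_lt_absNorm P)] at h
  rw [← coe_unzero ((P.valuation K).ne_zero_iff.mpr hα)]
  exact exp_le_exp.mpr h

namespace Divisor

theorem exists_natCast_valuation_le (D : Divisor K) :
    ∃ M : ℕ, M ≠ 0 ∧ ∀ P : HeightOneSpectrum (𝓞 K), P.valuation K (M : K) ≤ exp (-D.a P) := by
  obtain ⟨M, hM0, hM⟩ := exists_natCast_mem_pow D.fin.toFinset fun P => (D.a P).toNat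
  refine ⟨M, hM0, fun P => ?_⟩
  rcases le_or_gt (D.a P) 0 with ha | ha
  · calc P.valuation K (M : K) ≤ 1 := by exact_mod_cast P.valuation_le_one (M : 𝓞 K)
      _ ≤ exp (-D.a P) := by rw [← exp_zero, exp_le_exp]; omega
  · have hmem := hM P (D.fin.mem_toFinset.mpr ha.ne')
    rw [← intValuation_le_pow_iff_mem, Int.toNat_of_nonneg ha.le] at hmem
    rw [← map_natCast (algebraMap (𝓞 K) K), valuation_of_algebraMap]
    exact hmem

end Divisor

variable {D : Divisor K} {α : K}

theorem valuation_le_exp_of_mem_H0 (h : α ∈ H0 D) (P : HeightOneSpectrum (𝓞 K)) :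
    P.valuation K α ≤ exp (D.a P) :=
  valuation_le_exp_of_padicAbs_le (h.1 P)

theorem place_le_exp_of_mem_H0 (h : α ∈ H0 D) (w : InfinitePlace K) :
    w α ≤ Real.exp (D.r w) := by
  refine le_of_pow_le_pow_left₀ w.mult_ne_zero (Real.exp_pos _).le ?_
  rw [← Real.exp_nat_mul]
  exact h.2 w

end

/-- The set of multiples `H⁰(D)` of a divisor `D` on a number field is finite. -/
theorem H0_finite (D : Divisor K) : (H0 D).Finite := by
  obtain ⟨M, hM0, hM⟩ := D.exists_natCast_valuation_le
  have hinj : Function.Injective ((M : K) * ·) := mul_right_injective₀ (Nat.cast_ne_zero.mpr hM0)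
  refine ((Embeddings.finite_of_norm_le K ℂ (M * ∑ w, Real.exp (D.r w))).preimage
    hinj.injOn).subset fun α hα => ⟨?_, fun φ => ?_⟩
  · obtain ⟨y, hy⟩ := mem_integers_of_valuation_le_one K _ fun P => by
      calc P.valuation K (M * α) = P.valuation K M * P.valuation K α := map_mul _ _ _
        _ ≤ exp (-D.a P) * exp (D.a P) := mul_le_mul' (hM P) (valuation_le_exp_of_mem_H0 hα P)
        _ = 1 := by rw [← exp_add, neg_add_cancel, exp_zero]
    exact show IsIntegral ℤ ((M : K) * α) from hy ▸ y.isIntegral_coe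
  · calc ‖φ (M * α)‖ = M * InfinitePlace.mk φ α := by
          rw [map_mul, norm_mul, map_natCast, Complex.norm_natCast, InfinitePlace.apply]
      _ ≤ M * ∑ w, Real.exp (D.r w) := by
          gcongr
          exact (place_le_exp_of_mem_H0 hα _).trans
            (Finset.single_le_sum (fun w _ => (Real.exp_pos _).le) (Finset.mem_univ _))
end

section
/- Let K be a number field with ring of integers 𝓞_K. Then ∏_P N(P)^{r_P} = |disc_K|, where the product runs over the nonzero prime ideals P of 𝓞_K, r_P is the exponent of P in the different ideal of 𝓞_K over ℤ, and N(P) is the absolute norm of P. Equivalently, the absolute norm of the different ideal of 𝓞_K over ℤ equals the absolute value of the discriminant of K. -/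
open NumberField IsDedekindDomain Ideal

open scoped Classical in
/-- The exponent of the nonzero prime ideal `P` in the factorization of the ideal `I`. -/
noncomputable def primeExponent {R : Type*} [CommRing R] [IsDedekindDomain R]
    (P : HeightOneSpectrum R) (I : Ideal R) : ℕ :=
  (UniqueFactorizationMonoid.normalizedFactors I).count P.asIdeal

section Factorization

variable {R : Type*} [CommRing R] [IsDedekindDomain R]

theorem IsDedekindDomain.HeightOneSpectrum.maxPowDividing_eq_pow_primeExponent
    (P : HeightOneSpectrum R) {I : Ideal R} (hI : I ≠ 0) :
    P.maxPowDividing I = P.asIdeal ^ primeExponent P I := by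
  classical
  rw [P.maxPowDividing_eq_pow_multiset_count hI, primeExponent]

theorem finprod_map_pow_primeExponent {M F : Type*} [CommMonoid M] [FunLike F (Ideal R) M]
    [MonoidHomClass F (Ideal R) M] (f : F) {I : Ideal R} (hI : I ≠ 0) :
    ∏ᶠ P : HeightOneSpectrum R, f P.asIdeal ^ primeExponent P I = f I := by
  calc ∏ᶠ P : HeightOneSpectrum R, f P.asIdeal ^ primeExponent P I
      = ∏ᶠ P : HeightOneSpectrum R, f (P.maxPowDividing I) := by
        refine finprod_congr fun P => ?_
        rw [P.maxPowDividing_eq_pow_primeExponent hI, map_pow]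
    _ = f I := by
        rw [← map_finprod f (Ideal.hasFiniteMulSupport hI),
          finprod_heightOneSpectrum_factorization hI]

end Factorization

/-- For a number field `K`, `∏_P N(P)^(r_P) = |disc K|`, where `r_P` is the exponent of the
nonzero prime ideal `P` in the different ideal of `𝓞 K` over `ℤ`; equivalently, the absolute
norm of the different ideal of `𝓞 K` over `ℤ` equals the absolute value of the discriminant. -/
theorem absNorm_differentIdeal (K : Type*) [Field K] [NumberField K] :
    (∏ᶠ P : HeightOneSpectrum (𝓞 K),
        (absNorm P.asIdeal) ^ (primeExponent P (differentIdeal ℤ (𝓞 K)))) =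
      (discr K).natAbs ∧
    absNorm (differentIdeal ℤ (𝓞 K)) = (discr K).natAbs := by
  have hnorm := NumberField.absNorm_differentIdeal K (𝓞 K)
  exact ⟨(finprod_map_pow_primeExponent absNorm differentIdeal_ne_bot).trans hnorm, hnorm⟩
end

section
/- Let K be a number field and let α ∈ K be nonzero. Then ∏_P |α|_P · ∏_w w(α)^{m_w} = 1, where the first product runs over the nonzero prime ideals P of 𝓞_K with |α|_P = N(P)^{-v_P(α)} the normalized P-adic absolute value, and the second product runs over the infinite places w of K, with m_w = 1 or 2 according as w is real or complex. -/
open NumberField IsDedekindDomain Ideal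

variable (K : Type*) [Field K] [NumberField K]

variable {K}

variable (K)

section

variable {K}

open WithZeroMulInt in
theorem padicAbs_eq_norm_embedding (P : HeightOneSpectrum (𝓞 K)) (α : K) :
    padicAbs P α = ‖FinitePlace.embedding P α‖ := by
  rw [FinitePlace.norm_embedding']
  by_cases hα : α = 0
  · simp [padicAbs, hα]
  · rw [padicAbs, dif_neg hα, toNNReal_neg_apply _ ((P.valuation K).ne_zero_iff.mpr hα)]
    simp only [NNReal.coe_zpow, NNReal.coe_natCast]

theorem finprod_padicAbs (α : K) :
    ∏ᶠ P : HeightOneSpectrum (𝓞 K), padicAbs P α = ∏ᶠ w : FinitePlace K, w α := by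
  simp only [← finprod_comp_equiv FinitePlace.equivHeightOneSpectrum.symm,
    FinitePlace.equivHeightOneSpectrum_symm_apply, padicAbs_eq_norm_embedding]

end

/-- **Product formula**: for a nonzero element `α` of a number field `K`,
`∏_P |α|_P * ∏_w (w α)^(m_w) = 1`, the first product over the nonzero prime ideals of `𝓞 K`
and the second over the infinite places of `K`. -/
theorem product_formula (α : K) (hα : α ≠ 0) :
    (∏ᶠ P : HeightOneSpectrum (𝓞 K), padicAbs P α) *
      ∏ w : InfinitePlace K, (w α) ^ w.mult = 1 := by
  rw [finprod_padicAbs, mul_comm]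
  exact prod_abs_eq_one hα
end
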